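/- Let Ω = {x ∈ ℝ³ : |x| > 1} and 3 < p < ∞. For each natural number m ≥ 1, let g_m be the indicator function of the interval (m, 2m], define v_m(t,r) = (4πt)^{−1/2} ∫₀^∞ k(t,r,s) g_m(s) ds, define u_m(t,x) = |x|^{−1} v_m(t, |x| − 1) for x ∈ Ω, and let f_m(x) = |x|^{−1} for m + 1 < |x| ≤ 2m + 1 and f_m(x) = 0 otherwise. Then there exist C > 0 and M ≥ 1 such that for every natural number m ≥ M, ‖∇ₓ u_m(m², ·)‖_{L^p(Ω)} ≥ C m^{−3/p} ‖f_m‖_{L^p(Ω)}; in particular the decay rate t^{−3/(2p)} in the gradient estimate for the Dirichlet heat flow on Ω is optimal for 3 < p < ∞ along the times t_m = m². -/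

import Mathlib

open MeasureTheory ENNReal Filter

/-- `k(t,r,s) = exp(-(r-s)²/(4t)) - exp(-(r+s)²/(4t))`,
the (unnormalized) Dirichlet heat kernel of the half-line. -/
noncomputable def halfLineKernel (t r s : ℝ) : ℝ :=
  Real.exp (-(r - s) ^ 2 / (4 * t)) - Real.exp (-(r + s) ^ 2 / (4 * t))

/-- `g_m`, the indicator function of the interval `(m, 2m]`. -/
noncomputable def gIndicator (m : ℕ) (s : ℝ) : ℝ :=
  if s ∈ Set.Ioc (m : ℝ) (2 * m) then 1 else 0

/-- `v_m(t,r) = (4πt)^{-1/2} ∫₀^∞ k(t,r,s) g_m(s) ds`. -/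
noncomputable def vRad (m : ℕ) (t r : ℝ) : ℝ :=
  (4 * Real.pi * t) ^ (-(1 : ℝ) / 2) *
    ∫ s in Set.Ioi (0 : ℝ), halfLineKernel t r s * gIndicator m s

/-- `u_m(t,x) = |x|⁻¹ v_m(t, |x| - 1)`, the radial solution of the Dirichlet heat
equation on the exterior of the unit ball in `ℝ³`. -/
noncomputable def uRad (m : ℕ) (t : ℝ) (x : EuclideanSpace ℝ (Fin 3)) : ℝ :=
  ‖x‖⁻¹ * vRad m t (‖x‖ - 1)

/-- The radial initial data `f_m(x) = |x|⁻¹` for `m + 1 < |x| ≤ 2m + 1`, `0` otherwise. -/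
noncomputable def fData (m : ℕ) (x : EuclideanSpace ℝ (Fin 3)) : ℝ :=
  if (m : ℝ) + 1 < ‖x‖ ∧ ‖x‖ ≤ 2 * m + 1 then ‖x‖⁻¹ else 0

/-- The exterior of the closed unit ball in `ℝ³`. -/
def extBall : Set (EuclideanSpace ℝ (Fin 3)) := {x | 1 < ‖x‖}

/-! Through the Gaussian `φ(σ) = e^{-σ²/(4t)}` the half-line kernel integrates to
`∫ k(t,r,s) g_m(s) ds = ∫_{m-r}^{m+r} φ - ∫_{2m-r}^{2m+r} φ`. Hence `v_m(t,r) ≤ (4πt)^{-1/2} · 2r`,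
while at `t = m²` and `0 ≤ r ≤ 1` the derivative `∂_r v_m` is at least
`(4πt)^{-1/2} (e^{-1/4} - e^{-1})`, both prefactors being `(4π)^{-1/2} / m`. In the thin shell
`1 < |x| < 1 + (e^{-1/4} - e^{-1}) / 8` the radial derivative `|x|⁻¹ ∂_r v - |x|⁻² v` of `u_m(m², ·)`
is therefore of order `1/m`, so `‖∇u_m(m²)‖_p ≳ 1/m`. On the other side `|f_m| ≤ 1/m` is supported
in the ball of radius `3m`, so `‖f_m‖_p ≲ m^{-1} m^{3/p}`. -/

open Real Set intervalIntegral

noncomputable def gaussProfile (t σ : ℝ) : ℝ := exp (-σ ^ 2 / (4 * t))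

lemma continuous_gaussProfile (t : ℝ) : Continuous (gaussProfile t) := by
  unfold gaussProfile
  fun_prop

lemma gaussProfile_pos (t σ : ℝ) : 0 < gaussProfile t σ := exp_pos _

lemma gaussProfile_le_one {t : ℝ} (ht : 0 ≤ t) (σ : ℝ) : gaussProfile t σ ≤ 1 :=
  exp_le_one_iff.mpr (div_nonpos_of_nonpos_of_nonneg (by nlinarith [sq_nonneg σ]) (by positivity))

lemma halfLineKernel_eq_gaussProfile (t r s : ℝ) :
    halfLineKernel t r s = gaussProfile t (s - r) - gaussProfile t (s + r) := by
  simp only [halfLineKernel, gaussProfile]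
  ring_nf

lemma hasDerivAt_integral_gaussProfile_window (t c r : ℝ) :
    HasDerivAt (fun r => ∫ σ in c - r..c + r, gaussProfile t σ)
      (gaussProfile t (c + r) + gaussProfile t (c - r)) r := by
  have hΦ (x : ℝ) : HasDerivAt (fun x => ∫ σ in 0..x, gaussProfile t σ) (gaussProfile t x) x :=
    ((continuous_gaussProfile t).integral_hasStrictDerivAt 0 x).hasDerivAt
  have hright := (hΦ (c + r)).comp r ((hasDerivAt_id r).const_add c)
  have hleft := (hΦ (c - r)).comp r ((hasDerivAt_id r).const_sub c)
  have hwindow : (fun r => ∫ σ in c - r..c + r, gaussProfile t σ)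
      = fun r => (∫ σ in 0..c + r, gaussProfile t σ) - ∫ σ in 0..c - r, gaussProfile t σ := by
    ext r
    rw [integral_interval_sub_left] <;> exact (continuous_gaussProfile t).intervalIntegrable _ _
  rw [hwindow]
  exact (hright.sub hleft).congr_deriv (by ring)

lemma integral_gaussProfile_window_le {t : ℝ} (ht : 0 ≤ t) (c : ℝ) {r : ℝ} (hr : 0 ≤ r) :
    ∫ σ in c - r..c + r, gaussProfile t σ ≤ 2 * r := by
  calc ∫ σ in c - r..c + r, gaussProfile t σ ≤ ∫ _ in c - r..c + r, (1 : ℝ) :=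
        integral_mono_on (by linarith) ((continuous_gaussProfile t).intervalIntegrable _ _)
          intervalIntegrable_const fun σ _ => gaussProfile_le_one ht σ
    _ = 2 * r := by simp; ring

lemma integral_gaussProfile_window_nonneg (t c : ℝ) {r : ℝ} (hr : 0 ≤ r) :
    0 ≤ ∫ σ in c - r..c + r, gaussProfile t σ :=
  integral_nonneg (by linarith) fun σ _ => (gaussProfile_pos t σ).le

lemma setIntegral_halfLineKernel_Ioc (t r : ℝ) {a b : ℝ} (hab : a ≤ b) :
    ∫ s in Ioc a b, halfLineKernel t r s =
      (∫ σ in a - r..a + r, gaussProfile t σ) - ∫ σ in b - r..b + r, gaussProfile t σ := by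
  have hint (x y : ℝ) : IntervalIntegrable (gaussProfile t) volume x y :=
    (continuous_gaussProfile t).intervalIntegrable x y
  have hshift (d : ℝ) : IntervalIntegrable (fun s => gaussProfile t (s + d)) volume a b :=
    ((continuous_gaussProfile t).comp (continuous_add_const d)).intervalIntegrable a b
  rw [← integral_of_le hab]
  simp only [halfLineKernel_eq_gaussProfile]
  rw [integral_sub (by simpa [sub_eq_add_neg] using hshift (-r)) (hshift r),
    integral_comp_sub_right, integral_comp_add_right,
    ← integral_add_adjacent_intervals (hint (a - r) (a + r)) (hint (a + r) (b - r)),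
    ← integral_add_adjacent_intervals (hint (a + r) (b - r)) (hint (b - r) (b + r))]
  ring

lemma vRad_eq (m : ℕ) (t r : ℝ) :
    vRad m t r = (4 * π * t) ^ (-(1 : ℝ) / 2) *
      ((∫ σ in m - r..m + r, gaussProfile t σ) - ∫ σ in 2 * m - r..2 * m + r, gaussProfile t σ) := by
  have hsub : Ioc (m : ℝ) (2 * m) ⊆ Ioi 0 := fun s hs => (Nat.cast_nonneg m).trans_lt hs.1
  have hind : (fun s => halfLineKernel t r s * gIndicator m s)
      = (Ioc (m : ℝ) (2 * m)).indicator (halfLineKernel t r) := by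
    ext s
    by_cases hs : s ∈ Ioc (m : ℝ) (2 * m) <;> simp [gIndicator, hs]
  rw [vRad, hind, setIntegral_indicator measurableSet_Ioc, inter_eq_right.mpr hsub,
    setIntegral_halfLineKernel_Ioc t r (by linarith [(Nat.cast_nonneg m : (0 : ℝ) ≤ m)])]

lemma hasDerivAt_vRad (m : ℕ) (t r : ℝ) :
    HasDerivAt (vRad m t) ((4 * π * t) ^ (-(1 : ℝ) / 2) *
      (gaussProfile t (m + r) + gaussProfile t (m - r)
        - (gaussProfile t (2 * m + r) + gaussProfile t (2 * m - r)))) r := by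
  rw [show vRad m t = _ from funext (vRad_eq m t)]
  exact ((hasDerivAt_integral_gaussProfile_window t m r).sub
    (hasDerivAt_integral_gaussProfile_window t (2 * m) r)).const_mul _

lemma vRad_le (m : ℕ) {t r : ℝ} (ht : 0 ≤ t) (hr : 0 ≤ r) :
    vRad m t r ≤ (4 * π * t) ^ (-(1 : ℝ) / 2) * (2 * r) := by
  rw [vRad_eq]
  gcongr
  linarith [integral_gaussProfile_window_le ht m hr,
    integral_gaussProfile_window_nonneg t (2 * m) hr]

noncomputable def gaussGap : ℝ := exp (-1 / 4) - exp (-1)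

lemma gaussGap_pos : 0 < gaussGap := sub_pos.mpr (exp_lt_exp.mpr (by norm_num))

lemma gaussGap_le_one : gaussGap ≤ 1 := by
  linarith [exp_le_one_iff.mpr (by norm_num : (-1 / 4 : ℝ) ≤ 0), exp_pos (-1), gaussGap.eq_def]

lemma gaussGap_le_gaussProfile_window_sub {m r : ℝ} (hm : 2 ≤ m) (hr0 : 0 ≤ r) (hr1 : r ≤ 1) :
    gaussGap ≤ gaussProfile (m ^ 2) (m + r) + gaussProfile (m ^ 2) (m - r)
      - (gaussProfile (m ^ 2) (2 * m + r) + gaussProfile (m ^ 2) (2 * m - r)) := by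
  have h4m : 0 < 4 * m ^ 2 := by positivity
  have hnear : exp (-1 / 4) ≤ gaussProfile (m ^ 2) (m - r) := by
    refine exp_le_exp.mpr ?_
    rw [div_le_div_iff₀ (by norm_num) h4m]
    nlinarith
  have hmid : gaussProfile (m ^ 2) (2 * m - r) ≤ gaussProfile (m ^ 2) (m + r) := by
    refine exp_le_exp.mpr ?_
    rw [div_le_div_iff_of_pos_right h4m]
    nlinarith
  have hfar : gaussProfile (m ^ 2) (2 * m + r) ≤ exp (-1) := by
    refine exp_le_exp.mpr ?_
    rw [div_le_iff₀ h4m]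
    nlinarith
  linarith [gaussGap.eq_def]

lemma rpow_neg_half_four_pi_mul_sq {m : ℝ} (hm : 0 < m) :
    (4 * π * m ^ 2) ^ (-(1 : ℝ) / 2) = (4 * π) ^ (-(1 : ℝ) / 2) / m := by
  rw [mul_rpow (by positivity) (by positivity), ← Real.rpow_natCast, ← rpow_mul hm.le]
  norm_num [Real.rpow_neg_one, div_eq_mul_inv]

lemma norm_gradient_comp_norm {E : Type*} [NormedAddCommGroup E] [InnerProductSpace ℝ E]
    [CompleteSpace E] {ψ : ℝ → ℝ} {d : ℝ} {x : E} (hx : x ≠ 0) (hψ : HasDerivAt ψ d ‖x‖) :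
    ‖gradient (fun y => ψ ‖y‖) x‖ = |d| := by
  have hnorm : HasFDerivAt (fun y : E => ‖y‖) (‖x‖⁻¹ • innerSL ℝ x) x := by
    have hsqrt := (hasDerivAt_sqrt (by positivity : ‖x‖ ^ 2 ≠ 0)).comp_hasFDerivAt x
      (hasStrictFDerivAt_norm_sq x).hasFDerivAt
    simp only [Function.comp_def, sqrt_sq (norm_nonneg _)] at hsqrt
    refine hsqrt.congr_fderiv ?_
    ext y
    simp only [smul_apply, smul_eq_mul, nsmul_eq_mul, Nat.cast_ofNat]
    field_simp
  have hcomp : HasFDerivAt (fun y => ψ ‖y‖) (d • ‖x‖⁻¹ • innerSL ℝ x) x :=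
    hψ.comp_hasFDerivAt x hnorm
  rw [(hasFDerivAt_iff_hasGradientAt.mp hcomp).gradient,
    LinearIsometryEquiv.norm_map, norm_smul, norm_smul, innerSL_apply_norm, norm_inv, norm_norm,
    inv_mul_cancel₀ (norm_ne_zero_iff.mpr hx), mul_one, Real.norm_eq_abs]

lemma norm_gradient_uRad (m : ℕ) (t : ℝ) {x : EuclideanSpace ℝ (Fin 3)} (hx : x ≠ 0) {v' : ℝ}
    (hv : HasDerivAt (vRad m t) v' (‖x‖ - 1)) :
    ‖gradient (uRad m t) x‖ = |‖x‖⁻¹ * v' - (‖x‖ ^ 2)⁻¹ * vRad m t (‖x‖ - 1)| := by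
  have hψ : HasDerivAt (fun ρ => ρ⁻¹ * vRad m t (ρ - 1))
      (‖x‖⁻¹ * v' - (‖x‖ ^ 2)⁻¹ * vRad m t (‖x‖ - 1)) ‖x‖ := by
    refine ((hasDerivAt_inv (norm_ne_zero_iff.mpr hx)).mul
      (hv.comp ‖x‖ ((hasDerivAt_id _).sub_const 1))).congr_deriv ?_
    simp only [Function.comp_apply, id, mul_one]
    ring
  exact norm_gradient_comp_norm (ψ := fun ρ => ρ⁻¹ * vRad m t (ρ - 1)) hx hψ

lemma le_norm_gradient_uRad {m : ℕ} (hm : 2 ≤ m) {x : EuclideanSpace ℝ (Fin 3)} (hx1 : 1 < ‖x‖)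
    (hx2 : ‖x‖ < 1 + gaussGap / 8) :
    (4 * π) ^ (-(1 : ℝ) / 2) * gaussGap / 4 / m ≤ ‖gradient (uRad m ((m : ℝ) ^ 2)) x‖ := by
  have hm' : (2 : ℝ) ≤ m := by exact_mod_cast hm
  rw [norm_gradient_uRad m _ (norm_pos_iff.mp (by linarith)) (hasDerivAt_vRad m _ (‖x‖ - 1))]
  set ρ := ‖x‖
  set P := (4 * π * (m : ℝ) ^ 2) ^ (-(1 : ℝ) / 2)
  set D := gaussProfile ((m : ℝ) ^ 2) (m + (ρ - 1)) + gaussProfile ((m : ℝ) ^ 2) (m - (ρ - 1))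
    - (gaussProfile ((m : ℝ) ^ 2) (2 * m + (ρ - 1)) + gaussProfile ((m : ℝ) ^ 2) (2 * m - (ρ - 1)))
  have hP : P = (4 * π) ^ (-(1 : ℝ) / 2) / m := rpow_neg_half_four_pi_mul_sq (by positivity)
  have hP0 : 0 < P := by positivity
  have hδ0 := gaussGap_pos
  have hδ1 := gaussGap_le_one
  have hD : gaussGap ≤ D :=
    gaussGap_le_gaussProfile_window_sub hm' (by linarith) (by linarith)
  have hv : vRad m ((m : ℝ) ^ 2) (ρ - 1) ≤ P * gaussGap / 4 :=
    calc vRad m ((m : ℝ) ^ 2) (ρ - 1) ≤ P * (2 * (ρ - 1)) :=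
          vRad_le m (by positivity) (by linarith)
      _ ≤ P * gaussGap / 4 := by nlinarith
  have hinv : 1 / 2 ≤ ρ⁻¹ := by rw [one_div]; exact inv_anti₀ (by linarith) (by linarith)
  have hinv_sq : (ρ ^ 2)⁻¹ ≤ 1 := inv_le_one_of_one_le₀ (by nlinarith)
  have hinv_sq0 : 0 < (ρ ^ 2)⁻¹ := by positivity
  have hgrowth : P * gaussGap / 2 ≤ ρ⁻¹ * (P * D) :=
    calc P * gaussGap / 2 = 1 / 2 * (P * gaussGap) := by ring
      _ ≤ _ := mul_le_mul hinv (mul_le_mul_of_nonneg_left hD hP0.le) (by positivity) (by positivity)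
  have hdecay : (ρ ^ 2)⁻¹ * vRad m ((m : ℝ) ^ 2) (ρ - 1) ≤ P * gaussGap / 4 := by
    nlinarith [mul_le_mul_of_nonneg_left hv hinv_sq0.le, mul_le_mul_of_nonneg_right hinv_sq
      (by positivity : 0 ≤ P * gaussGap / 4)]
  refine le_trans ?_ (le_abs_self _)
  calc (4 * π) ^ (-(1 : ℝ) / 2) * gaussGap / 4 / m = P * gaussGap / 2 - P * gaussGap / 4 := by
        rw [hP]; ring
    _ ≤ _ := sub_le_sub hgrowth hdecay

lemma MeasureTheory.ofReal_mul_measure_rpow_le_eLpNorm {α F : Type*} [MeasurableSpace α]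
    {μ : Measure α} [NormedAddCommGroup F] {f : α → F} {s : Set α} {p : ℝ≥0∞} {c : ℝ}
    (hp : p ≠ 0) (hs : MeasurableSet s) (hμs : μ s ≠ 0) (hc : 0 ≤ c)
    (hf : ∀ x ∈ s, c ≤ ‖f x‖) :
    ENNReal.ofReal c * μ s ^ (1 / p.toReal) ≤ eLpNorm f p μ := by
  rw [← Real.enorm_of_nonneg hc, ← eLpNorm_indicator_const' hs hμs hp]
  refine eLpNorm_mono fun x => ?_
  by_cases hx : x ∈ s
  · simpa [hx, abs_of_nonneg hc] using hf x hx
  · simp [hx]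

def boundaryShell (w : ℝ) : Set (EuclideanSpace ℝ (Fin 3)) :=
  Metric.ball 0 (1 + w) \ Metric.closedBall 0 1

lemma boundaryShell_subset_extBall (w : ℝ) : boundaryShell w ⊆ extBall :=
  fun x hx => by simpa [extBall] using hx.2

lemma volume_boundaryShell_pos {w : ℝ} (hw : 0 < w) : 0 < volume (boundaryShell w) := by
  obtain ⟨y, hy⟩ := exists_norm_eq (EuclideanSpace ℝ (Fin 3)) (by positivity : 0 ≤ 1 + w / 2)
  refine (Metric.isOpen_ball.sdiff Metric.isClosed_closedBall).measure_pos volume ⟨y, ?_⟩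
  rw [Set.mem_sdiff, mem_ball_zero_iff, mem_closedBall_zero_iff, hy, not_le]
  constructor <;> linarith

lemma volume_boundaryShell_lt_top (w : ℝ) : volume (boundaryShell w) < ⊤ :=
  (measure_mono sdiff_subset).trans_lt measure_ball_lt_top

lemma eLpNorm_gradient_uRad_ge {m : ℕ} (hm : 2 ≤ m) {p : ℝ≥0∞} (hp : p ≠ 0) :
    ENNReal.ofReal ((4 * π) ^ (-(1 : ℝ) / 2) * gaussGap / 4 / m *
      (volume (boundaryShell (gaussGap / 8))).toReal ^ (1 / p.toReal))
      ≤ eLpNorm (fun x => ‖gradient (uRad m ((m : ℝ) ^ 2)) x‖) p (volume.restrict extBall) := by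
  have hshell := boundaryShell_subset_extBall (gaussGap / 8)
  have hmeas : MeasurableSet (boundaryShell (gaussGap / 8)) :=
    measurableSet_ball.diff measurableSet_closedBall
  have hpos := volume_boundaryShell_pos (by linarith [gaussGap_pos] : 0 < gaussGap / 8)
  have hgrad := ofReal_mul_measure_rpow_le_eLpNorm hp hmeas
    (by rw [Measure.restrict_apply hmeas, inter_eq_left.mpr hshell]; exact hpos.ne')
    (by have := gaussGap_pos; positivity) fun x hx =>
      (le_norm_gradient_uRad hm (hshell hx) (by simpa using hx.1)).trans_eq (norm_norm _).symm
  rwa [Measure.restrict_apply hmeas, inter_eq_left.mpr hshell,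
    ← ENNReal.ofReal_toReal (volume_boundaryShell_lt_top _).ne,
    ENNReal.ofReal_rpow_of_nonneg ENNReal.toReal_nonneg (by positivity),
    ← ENNReal.ofReal_mul (by have := gaussGap_pos; positivity)] at hgrad

lemma norm_fData_le {m : ℕ} (hm : 1 ≤ m) (x : EuclideanSpace ℝ (Fin 3)) :
    ‖fData m x‖ ≤ (Metric.closedBall 0 (m * 3)).indicator (fun _ => (m : ℝ)⁻¹) x := by
  have hm' : (1 : ℝ) ≤ m := by exact_mod_cast hm
  unfold fData
  split_ifs with hx
  · have hball : x ∈ Metric.closedBall 0 (m * 3) := by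
      rw [mem_closedBall_zero_iff]; linarith [hx.2]
    rw [indicator_of_mem hball, norm_inv, norm_norm]
    exact inv_anti₀ (by positivity) (by linarith [hx.1])
  · rw [norm_zero]
    exact indicator_nonneg (fun _ _ => by positivity) x

lemma eLpNorm_fData_le {m : ℕ} (hm : 1 ≤ m) (p : ℝ≥0∞) :
    eLpNorm (fData m) p (volume.restrict extBall) ≤ ENNReal.ofReal ((m : ℝ)⁻¹ *
      ((m : ℝ) ^ 3 * (volume (Metric.closedBall (0 : EuclideanSpace ℝ (Fin 3)) 3)).toReal)
        ^ (1 / p.toReal)) := by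
  have hvol : volume (Metric.closedBall (0 : EuclideanSpace ℝ (Fin 3)) (m * 3)) = ENNReal.ofReal
      ((m : ℝ) ^ 3 * (volume (Metric.closedBall (0 : EuclideanSpace ℝ (Fin 3)) 3)).toReal) := by
    rw [Measure.addHaar_closedBall_mul _ _ (Nat.cast_nonneg m) (by norm_num),
      finrank_euclideanSpace_fin, ENNReal.ofReal_mul (by positivity),
      ENNReal.ofReal_toReal measure_closedBall_lt_top.ne]
  calc eLpNorm (fData m) p (volume.restrict extBall) ≤ eLpNorm (fData m) p volume :=
        eLpNorm_restrict_le _ _ _ _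
    _ ≤ _ := (eLpNorm_mono_real (norm_fData_le hm)).trans (eLpNorm_indicator_const_le _ p)
    _ = _ := by
      rw [hvol, ENNReal.ofReal_rpow_of_nonneg (by positivity) (by positivity),
        Real.enorm_of_nonneg (by positivity), ← ENNReal.ofReal_mul (by positivity)]

theorem optimality_gradient_estimate_high_p_general (p : ℝ≥0∞) :
    ∃ C : ℝ, 0 < C ∧ ∃ M : ℕ, 1 ≤ M ∧ ∀ m : ℕ, M ≤ m →
      ENNReal.ofReal (C * (m : ℝ) ^ (-(3 : ℝ) / p.toReal)) *
          eLpNorm (fData m) p (volume.restrict extBall)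
        ≤ eLpNorm (fun x => ‖gradient (uRad m ((m : ℝ) ^ 2)) x‖) p
            (volume.restrict extBall) := by
  obtain rfl | hp := eq_or_ne p 0
  · exact ⟨1, one_pos, 1, le_rfl, fun m _ => by simp⟩
  set c := (4 * π) ^ (-(1 : ℝ) / 2) * gaussGap / 4
  set V := (volume (boundaryShell (gaussGap / 8))).toReal
  set B := (volume (Metric.closedBall (0 : EuclideanSpace ℝ (Fin 3)) 3)).toReal
  have hc : 0 < c := by have := gaussGap_pos; positivity
  have hV : 0 < V := ENNReal.toReal_pos
    (volume_boundaryShell_pos (by linarith [gaussGap_pos])).ne' (volume_boundaryShell_lt_top _).ne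
  have hB : 0 < B := ENNReal.toReal_pos (Metric.measure_closedBall_pos _ _ (by norm_num)).ne'
    measure_closedBall_lt_top.ne
  refine ⟨c * (V / B) ^ (1 / p.toReal), by positivity, 2, by norm_num, fun m hm => ?_⟩
  have hm0 : (0 : ℝ) < m := by exact_mod_cast (by omega : 0 < m)
  have hpow : (m : ℝ) ^ (-(3 : ℝ) / p.toReal) * ((m : ℝ) ^ 3) ^ (1 / p.toReal) = 1 := by
    rw [← Real.rpow_natCast, ← rpow_mul hm0.le, ← rpow_add hm0,
      show -(3 : ℝ) / p.toReal + ((3 : ℕ) : ℝ) * (1 / p.toReal) = 0 by push_cast; ring, Real.rpow_zero]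
  refine le_trans ?_ (eLpNorm_gradient_uRad_ge hm hp)
  calc _ ≤ _ := mul_le_mul_right (eLpNorm_fData_le (by omega) p) _
    _ = ENNReal.ofReal (c / m * V ^ (1 / p.toReal) *
          ((m : ℝ) ^ (-(3 : ℝ) / p.toReal) * ((m : ℝ) ^ 3) ^ (1 / p.toReal))) := by
      rw [← ENNReal.ofReal_mul (by positivity), div_rpow hV.le hB.le, mul_rpow (by positivity) hB.le]
      congr 1
      field_simp
    _ = _ := by rw [hpow, mul_one]

/-- Optimality of the decay rate `t^{-3/(2p)}` of the gradient estimate for the Dirichlet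
heat flow on the exterior of the unit ball in `ℝ³` for `3 < p < ∞`: the solutions `u_m`
with initial data `f_m` satisfy `‖∇ u_m(m²)‖_{L^p(Ω)} ≥ C m^{-3/p} ‖f_m‖_{L^p(Ω)}` for
all large `m`, where `t_m = m²` so that `m^{-3/p} = t_m^{-3/(2p)}`. -/
theorem optimality_gradient_estimate_high_p (p : ℝ≥0∞) (hp3 : 3 < p) (hptop : p < ⊤) :
    ∃ C : ℝ, 0 < C ∧ ∃ M : ℕ, 1 ≤ M ∧ ∀ m : ℕ, M ≤ m →
      ENNReal.ofReal (C * (m : ℝ) ^ (-(3 : ℝ) / p.toReal)) *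
          eLpNorm (fData m) p (volume.restrict extBall)
        ≤ eLpNorm (fun x => ‖gradient (uRad m ((m : ℝ) ^ 2)) x‖) p
            (volume.restrict extBall) :=
  optimality_gradient_estimate_high_p_general p
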